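/- For integers m ≥ 3 and a, b ≥ 0, the chromatic symmetric function of the hat satisfies the recurrence X_{H_{a,m,b}} = X_{H_{a+1, m−1, b}} + X_{S(a+1, m−2, b)} − X_{P_{a+1}} · X_{T_{m−1, b}}. -/

import Mathlib

open Finset

/-- Symmetric functions in countably many variables `x_0, x_1, x_2, …`, realized inside
the ring of formal multivariate power series over `ℚ`. -/
abbrev SymF : Type := MvPowerSeries ℕ ℚ

open Classical in
/-- The elementary symmetric function `e_k`: the sum of all squarefree monomials of
degree `k` (so `e_0 = 1`). -/
noncomputable def esymm (k : ℕ) : SymF :=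
  fun d : ℕ →₀ ℕ =>
    if (d.sum fun _ e => e) = k ∧ ∀ i, d i ≤ 1 then (1 : ℚ) else 0

/-- `e_I = e_{i_1} ⋯ e_{i_s}` for a list `I = [i_1, …, i_s]`. -/
noncomputable def esymmProd (I : List ℕ) : SymF := (I.map esymm).prod

open Classical in
/-- The chromatic symmetric function `X_G = Σ_κ ∏_v x_{κ v}`, summed over proper colorings
`κ : V → ℕ`: the coefficient of the monomial with exponent vector `d` is the number of
proper colorings all of whose color fibres have the sizes recorded by `d`. -/
noncomputable def csf {V : Type} [Finite V] (G : SimpleGraph V) : SymF :=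
  fun d : ℕ →₀ ℕ =>
    (({κ : V → ℕ | (∀ v w, G.Adj v w → κ v ≠ κ w) ∧
        ∀ i : ℕ, {v | κ v = i}.ncard = d i}).ncard : ℚ)

/-- The path `P_n` on vertices `0, 1, …, n-1`. -/
def pathG (n : ℕ) : SimpleGraph (Fin n) :=
  SimpleGraph.fromRel (fun i j => (i : ℕ) + 1 = (j : ℕ))

/-- The tadpole `T_{m,l}`: the cycle `C_m` on vertices `0, …, m-1` (consecutive edges
together with the edge `{0, m-1}`), whose vertex `m-1` is joined by an edge to one end of
the path `m, m+1, …, m+l-1` on `l` vertices. -/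
def tadpoleG (m l : ℕ) : SimpleGraph (Fin (m + l)) :=
  SimpleGraph.fromRel (fun i j =>
    (i : ℕ) + 1 = (j : ℕ) ∨ ((i : ℕ) = 0 ∧ (j : ℕ) = m - 1))

/-- The hat `H_{a,m,b}`: the path on vertices `0, 1, …, a+m+b-1` together with the extra
edge joining vertex `a` to vertex `a+m-1` (in 1-indexed terms, the edge `v_{a+1} v_{a+m}`). -/
def hatG (a m b : ℕ) : SimpleGraph (Fin (a + m + b)) :=
  SimpleGraph.fromRel (fun i j =>
    (i : ℕ) + 1 = (j : ℕ) ∨ ((i : ℕ) = a ∧ (j : ℕ) = a + m - 1))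

/-- The spider `S(a, b, c)`: the tree on `a + b + c + 1` vertices obtained by identifying
one endpoint of three paths with `a`, `b` and `c` edges respectively.  The centre is `0`,
and the legs are `1, …, a`, then `a+1, …, a+b`, then `a+b+1, …, a+b+c`. -/
def spiderG (a b c : ℕ) : SimpleGraph (Fin (a + b + c + 1)) :=
  SimpleGraph.fromRel (fun i j =>
    ((i : ℕ) + 1 = (j : ℕ) ∧ (j : ℕ) ≠ a + 1 ∧ (j : ℕ) ≠ a + b + 1) ∨
    ((i : ℕ) = 0 ∧ ((j : ℕ) = a + 1 ∨ (j : ℕ) = a + b + 1)))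

/-!
Let `B` be the path `0 — 1 — ⋯ — (a+m+b-1)` with the edge `a — (a+1)` removed, and let
`u = a`, `v = a + 1`, `w = a + m - 1`. Up to relabelling, `H_{a,m,b} = B + uv + uw`,
`H_{a+1,m-1,b} ≅ B + uv + vw`, `S(a+1,m-2,b) ≅ B + uw` and `P_{a+1} ⊔ T_{m-1,b} ≅ B + vw`, and
`X` is multiplicative on disjoint unions. The recurrence is then the triangle relation
`X_{B+uv+uw} + X_{B+vw} = X_{B+uv+vw} + X_{B+uw}`: split the proper colourings of `B + uw` and
of `B + vw` according to whether `κ u = κ v`. Those with `κ u ≠ κ v` are the proper colourings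
of `B + uv + uw` and of `B + uv + vw`, and those with `κ u = κ v` are the same on both sides.
-/

open SimpleGraph

section ProperColoring

variable {V W : Type}

def IsProperColoring (G : SimpleGraph V) (κ : V → ℕ) : Prop :=
  ∀ v w, G.Adj v w → κ v ≠ κ w

theorem isProperColoring_sup {G H : SimpleGraph V} {κ : V → ℕ} :
    IsProperColoring (G ⊔ H) κ ↔ IsProperColoring G κ ∧ IsProperColoring H κ :=
  ⟨fun h => ⟨fun v w hvw => h v w (Or.inl hvw), fun v w hvw => h v w (Or.inr hvw)⟩,
    fun ⟨hG, hH⟩ v w hvw => hvw.elim (hG v w) (hH v w)⟩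

theorem isProperColoring_edge {u v : V} (huv : u ≠ v) {κ : V → ℕ} :
    IsProperColoring (edge u v) κ ↔ κ u ≠ κ v := by
  refine ⟨fun h => h u v ((edge_adj u v u v).2 ⟨Or.inl ⟨rfl, rfl⟩, huv⟩), fun h x y hxy => ?_⟩
  obtain ⟨⟨rfl, rfl⟩ | ⟨rfl, rfl⟩, -⟩ := (edge_adj _ _ x y).1 hxy
  · exact h
  · exact h.symm

theorem isProperColoring_sum {G : SimpleGraph V} {H : SimpleGraph W} {κ : V ⊕ W → ℕ} :
    IsProperColoring (G ⊕g H) κ ↔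
      IsProperColoring G (κ ∘ Sum.inl) ∧ IsProperColoring H (κ ∘ Sum.inr) := by
  refine ⟨fun h => ⟨fun v w hvw => h _ _ (sum_adj_inl.2 hvw),
    fun v w hvw => h _ _ (sum_adj_inr.2 hvw)⟩, fun ⟨hG, hH⟩ => ?_⟩
  rintro (v | v) (w | w) hvw
  · exact hG v w hvw
  · simp at hvw
  · simp at hvw
  · exact hH v w hvw

theorem isProperColoring_comp_iso {G : SimpleGraph V} {H : SimpleGraph W} (e : G ≃g H)
    (κ : W → ℕ) : IsProperColoring G (κ ∘ e) ↔ IsProperColoring H κ := by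
  refine ⟨fun h x y hxy => ?_, fun h v w hvw => h _ _ (e.map_adj_iff.2 hvw)⟩
  simpa using h (e.symm x) (e.symm y) (e.symm.map_adj_iff.2 hxy)

end ProperColoring

section ColoringSeries

variable {V W : Type} [Fintype V] [Fintype W]

-- the exponent vector of the monomial `∏ v, x_{κ v}`
noncomputable def colorContent (κ : V → ℕ) : ℕ →₀ ℕ := ∑ v, Finsupp.single (κ v) 1

noncomputable def coloringSeries (P : (V → ℕ) → Prop) : SymF :=
  fun d => ({κ : V → ℕ | P κ ∧ colorContent κ = d}.ncard : ℚ)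

theorem colorContent_apply (κ : V → ℕ) (i : ℕ) : colorContent κ i = {v | κ v = i}.ncard := by
  classical
  rw [colorContent, Finsupp.finsetSum_apply, Set.ncard_eq_toFinset_card', Set.toFinset_ofPred,
    Finset.card_filter]
  simp only [Finsupp.single_apply]

theorem colorContent_comp_equiv (e : W ≃ V) (κ : V → ℕ) : colorContent (κ ∘ e) = colorContent κ :=
  e.sum_comp fun v => Finsupp.single (κ v) 1

theorem colorContent_sum (κ : V ⊕ W → ℕ) :
    colorContent κ = colorContent (κ ∘ Sum.inl) + colorContent (κ ∘ Sum.inr) :=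
  Fintype.sum_sum_type _

theorem finite_setOf_colorContent_eq (d : ℕ →₀ ℕ) : {κ : V → ℕ | colorContent κ = d}.Finite := by
  refine (Set.Finite.pi fun _ : V => d.support.finite_toSet).subset fun κ hκ v _ => ?_
  have : colorContent κ (κ v) ≠ 0 := by
    rw [colorContent_apply]; exact Set.ncard_ne_zero_of_mem (show v ∈ {w | κ w = κ v} from rfl)
  rw [hκ] at this
  simpa using this

instance (P : (V → ℕ) → Prop) (d : ℕ →₀ ℕ) : Finite {κ : V → ℕ // P κ ∧ colorContent κ = d} :=
  ((finite_setOf_colorContent_eq d).subset fun _ h => h.2).to_subtype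

theorem csf_eq_coloringSeries (G : SimpleGraph V) : csf G = coloringSeries (IsProperColoring G) := by
  funext d
  simp only [csf, coloringSeries, Finsupp.ext_iff, colorContent_apply]
  rfl

theorem coloringSeries_congr {P Q : (V → ℕ) → Prop} (h : ∀ κ, P κ ↔ Q κ) :
    coloringSeries P = coloringSeries Q :=
  congrArg _ (funext fun κ => propext (h κ))

theorem coloringSeries_and_add_and_not (P A : (V → ℕ) → Prop) :
    coloringSeries (fun κ => P κ ∧ A κ) + coloringSeries (fun κ => P κ ∧ ¬ A κ) =
      coloringSeries P := by
  funext d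
  have hfin : {κ : V → ℕ | P κ ∧ colorContent κ = d}.Finite :=
    (finite_setOf_colorContent_eq d).subset fun _ h => h.2
  show coloringSeries _ d + coloringSeries _ d = coloringSeries P d
  simp only [coloringSeries]
  rw [← Set.ncard_inter_add_ncard_sdiff_eq_ncard _ {κ | A κ} hfin]
  push_cast
  congr 3 <;> ext κ <;> simp only [Set.mem_inter_iff, Set.mem_sdiff, Set.mem_ofPred_eq] <;> tauto

theorem coloringSeries_triangle (P A B C : (V → ℕ) → Prop) (h : ∀ κ, ¬ A κ → (B κ ↔ C κ)) :
    coloringSeries (fun κ => P κ ∧ A κ ∧ B κ) + coloringSeries (fun κ => P κ ∧ C κ) =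
      coloringSeries (fun κ => P κ ∧ A κ ∧ C κ) + coloringSeries (fun κ => P κ ∧ B κ) := by
  have split (X : (V → ℕ) → Prop) : coloringSeries (fun κ => P κ ∧ X κ) =
      coloringSeries (fun κ => P κ ∧ A κ ∧ X κ) + coloringSeries (fun κ => P κ ∧ X κ ∧ ¬ A κ) := by
    rw [← coloringSeries_and_add_and_not _ A]
    congr 1 <;> exact coloringSeries_congr fun κ => by tauto
  have hBC : coloringSeries (fun κ => P κ ∧ B κ ∧ ¬ A κ) =
      coloringSeries (fun κ => P κ ∧ C κ ∧ ¬ A κ) :=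
    coloringSeries_congr fun κ => by grind
  rw [split B, split C, hBC]
  abel

theorem coloringSeries_comp_equiv (e : W ≃ V) (P : (W → ℕ) → Prop) :
    coloringSeries (fun κ : V → ℕ => P (κ ∘ e)) = coloringSeries P := by
  funext d
  simp only [coloringSeries, ← Nat.card_coe_set_eq]
  congr 1
  refine Nat.card_congr (Equiv.subtypeEquiv (e.arrowCongr (Equiv.refl ℕ)).symm fun κ => ?_)
  change _ ↔ P (κ ∘ e) ∧ colorContent (κ ∘ e) = d
  rw [colorContent_comp_equiv]
  exact Iff.rfl

noncomputable def sumColoringEquiv (P : (V → ℕ) → Prop) (Q : (W → ℕ) → Prop) (d : ℕ →₀ ℕ) :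
    {κ : V ⊕ W → ℕ | (P (κ ∘ Sum.inl) ∧ Q (κ ∘ Sum.inr)) ∧ colorContent κ = d} ≃
      Σ p : antidiagonal d, {κ : V → ℕ // P κ ∧ colorContent κ = p.1.1} ×
        {κ : W → ℕ // Q κ ∧ colorContent κ = p.1.2} where
  toFun κ := ⟨⟨(colorContent (κ.1 ∘ Sum.inl), colorContent (κ.1 ∘ Sum.inr)),
      mem_antidiagonal.2 ((colorContent_sum κ.1).symm.trans κ.2.2)⟩,
    ⟨κ.1 ∘ Sum.inl, κ.2.1.1, rfl⟩, ⟨κ.1 ∘ Sum.inr, κ.2.1.2, rfl⟩⟩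
  invFun x := ⟨Sum.elim x.2.1 x.2.2, ⟨x.2.1.2.1, x.2.2.2.1⟩, by
    rw [colorContent_sum, Sum.elim_comp_inl, Sum.elim_comp_inr, x.2.1.2.2, x.2.2.2.2]
    exact mem_antidiagonal.1 x.1.2⟩
  left_inv κ := Subtype.ext (Sum.elim_comp_inl_inr κ.1)
  right_inv := by
    rintro ⟨⟨⟨p₁, p₂⟩, hp⟩, ⟨κ₁, h₁, e₁⟩, ⟨κ₂, h₂, e₂⟩⟩
    dsimp only at e₁ e₂
    subst e₁ e₂
    rfl

theorem coloringSeries_sum (P : (V → ℕ) → Prop) (Q : (W → ℕ) → Prop) :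
    coloringSeries (fun κ : V ⊕ W → ℕ => P (κ ∘ Sum.inl) ∧ Q (κ ∘ Sum.inr)) =
      coloringSeries P * coloringSeries Q := by
  classical
  funext d
  show _ = MvPowerSeries.coeff d (coloringSeries P * coloringSeries Q)
  rw [MvPowerSeries.coeff_mul, coloringSeries, ← Nat.card_coe_set_eq,
    Nat.card_congr (sumColoringEquiv P Q d), Nat.card_sigma, Nat.cast_sum,
    ← Finset.sum_coe_sort (antidiagonal d)]
  refine Finset.sum_congr rfl fun p _ => ?_
  rw [Nat.card_prod, Nat.cast_mul]
  rfl

end ColoringSeries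

section ChromaticSymmetricFunction

variable {V W : Type} [Fintype V] [Fintype W]

theorem csf_congr {G : SimpleGraph V} {H : SimpleGraph W} (e : G ≃g H) : csf G = csf H := by
  rw [csf_eq_coloringSeries, csf_eq_coloringSeries,
    ← coloringSeries_comp_equiv e.toEquiv (IsProperColoring G)]
  exact coloringSeries_congr (isProperColoring_comp_iso e)

theorem csf_sum (G : SimpleGraph V) (H : SimpleGraph W) : csf (G ⊕g H) = csf G * csf H := by
  rw [csf_eq_coloringSeries, csf_eq_coloringSeries, csf_eq_coloringSeries, ← coloringSeries_sum]
  exact coloringSeries_congr fun κ => isProperColoring_sum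

theorem csf_sup_edge_triangle (G : SimpleGraph V) {u v w : V} (huv : u ≠ v) (huw : u ≠ w)
    (hvw : v ≠ w) :
    csf (G ⊔ edge u v ⊔ edge u w) + csf (G ⊔ edge v w) =
      csf (G ⊔ edge u v ⊔ edge v w) + csf (G ⊔ edge u w) := by
  simp only [csf_eq_coloringSeries]
  convert coloringSeries_triangle (IsProperColoring G) (fun κ => κ u ≠ κ v) (fun κ => κ u ≠ κ w)
    (fun κ => κ v ≠ κ w) (fun κ h => by rw [not_not.1 h]) using 3 <;>
  · funext κ
    simp only [isProperColoring_sup, isProperColoring_edge huv, isProperColoring_edge huw,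
      isProperColoring_edge hvw, and_assoc]

end ChromaticSymmetricFunction

def cutPath (n a : ℕ) : SimpleGraph (Fin n) :=
  SimpleGraph.fromRel fun i j => (i : ℕ) + 1 = j ∧ (i : ℕ) ≠ a

theorem hatG_eq_cutPath_sup (a m b : ℕ) (hm : 2 ≤ m) :
    hatG a m b = cutPath (a + m + b) a ⊔ edge ⟨a, by omega⟩ ⟨a + 1, by omega⟩ ⊔
      edge ⟨a, by omega⟩ ⟨a + m - 1, by omega⟩ := by
  ext i j
  simp only [hatG, cutPath, sup_adj, fromRel_adj, edge_adj, ne_eq, Fin.ext_iff]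
  omega

def hatGIsoCutPathSup (a m b : ℕ) (hm : 2 ≤ m) :
    hatG (a + 1) (m - 1) b ≃g cutPath (a + m + b) a ⊔ edge ⟨a, by omega⟩ ⟨a + 1, by omega⟩ ⊔
      edge ⟨a + 1, by omega⟩ ⟨a + m - 1, by omega⟩ where
  toEquiv := finCongr (by omega)
  map_rel_iff' {i j} := by
    simp only [hatG, cutPath, sup_adj, fromRel_adj, edge_adj, ne_eq, Fin.ext_iff, finCongr_apply,
      Fin.val_cast]
    omega

-- The centre goes to `a + m - 1`; the first leg is reversed onto `0, …, a`, the second onto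
-- `a + 1, …, a + m - 2`, and the third is fixed.
def spiderVertexToHat (a m j : ℕ) : ℕ :=
  if j = 0 then a + m - 1
  else if j ≤ a + 1 then a + 1 - j
  else if j ≤ a + m - 1 then 2 * a + m - j
  else j

theorem spiderVertexToHat_cases (a m j : ℕ) :
    j = 0 ∧ spiderVertexToHat a m j = a + m - 1 ∨
    0 < j ∧ j ≤ a + 1 ∧ spiderVertexToHat a m j = a + 1 - j ∨
    a + 1 < j ∧ j ≤ a + m - 1 ∧ spiderVertexToHat a m j = 2 * a + m - j ∨
    a + m - 1 < j ∧ spiderVertexToHat a m j = j := by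
  unfold spiderVertexToHat
  split_ifs <;> omega

noncomputable def spiderGIsoCutPathSup (a m b : ℕ) (hm : 2 ≤ m) :
    spiderG (a + 1) (m - 2) b ≃g
      cutPath (a + m + b) a ⊔ edge ⟨a, by omega⟩ ⟨a + m - 1, by omega⟩ where
  toEquiv := Equiv.ofBijective
    (fun j => ⟨spiderVertexToHat a m j, by have := spiderVertexToHat_cases a m j; omega⟩) <| by
      refine (Fintype.bijective_iff_injective_and_card _).2
        ⟨fun i j hij => Fin.ext ?_, by simp only [Fintype.card_fin]; omega⟩
      have := spiderVertexToHat_cases a m i; have := spiderVertexToHat_cases a m j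
      have := congrArg Fin.val hij
      dsimp only at this
      omega
  map_rel_iff' {i j} := by
    have := i.isLt; have := j.isLt
    have hi := spiderVertexToHat_cases a m i; have hj := spiderVertexToHat_cases a m j
    simp only [spiderG, cutPath, sup_adj, fromRel_adj, edge_adj, ne_eq, Fin.ext_iff,
      Equiv.ofBijective_apply]
    generalize spiderVertexToHat a m i = x at *
    generalize spiderVertexToHat a m j = y at *
    rcases hi with ⟨hi, rfl⟩ | ⟨hi, hi', rfl⟩ | ⟨hi, hi', rfl⟩ | ⟨hi, rfl⟩ <;>
    rcases hj with ⟨hj, rfl⟩ | ⟨hj, hj', rfl⟩ | ⟨hj, hj', rfl⟩ | ⟨hj, rfl⟩ <;>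
    grind

def pathGSumTadpoleGIsoCutPathSup (a m b : ℕ) (hm : 2 ≤ m) :
    pathG (a + 1) ⊕g tadpoleG (m - 1) b ≃g
      cutPath (a + m + b) a ⊔ edge ⟨a + 1, by omega⟩ ⟨a + m - 1, by omega⟩ where
  toEquiv := finSumFinEquiv.trans (finCongr (by omega))
  map_rel_iff' {i j} := by
    rcases i with i | i <;> rcases j with j | j <;>
    simp only [pathG, tadpoleG, cutPath, sup_adj, fromRel_adj, edge_adj, ne_eq, Fin.ext_iff,
      finCongr_apply, Fin.val_cast, Equiv.trans_apply, finSumFinEquiv_apply_left,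
      finSumFinEquiv_apply_right, Fin.val_castAdd, Fin.val_natAdd, sum_adj, iff_false] <;>
    have := i.isLt <;> have := j.isLt <;> omega

/-- For `m ≥ 3` and `a, b ≥ 0`,
`X_{H_{a,m,b}} = X_{H_{a+1,m-1,b}} + X_{S(a+1,m-2,b)} - X_{P_{a+1}} X_{T_{m-1,b}}`. -/
theorem stmt_18 (a m b : ℕ) (hm : 3 ≤ m) :
    csf (hatG a m b) =
      csf (hatG (a + 1) (m - 1) b) + csf (spiderG (a + 1) (m - 2) b) -
        csf (pathG (a + 1)) * csf (tadpoleG (m - 1) b) := by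
  rw [hatG_eq_cutPath_sup a m b (by omega), csf_congr (hatGIsoCutPathSup a m b (by omega)),
    csf_congr (spiderGIsoCutPathSup a m b (by omega)), ← csf_sum,
    csf_congr (pathGSumTadpoleGIsoCutPathSup a m b (by omega)), eq_sub_iff_add_eq]
  exact csf_sup_edge_triangle _ (by simp) (by simp; omega) (by simp; omega)
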